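/- There exists a universal constant C₀ > 0 with the following property. Let K ≥ 1, A > 0, d > 0, let α, β : [0,∞) → ℂ be continuous with |α(t)| ≤ A/(1+t) and |β(t)| ≤ d/(1+Kt)² for all t ≥ 0, and let ρ : [0,∞) → ℂ be continuous and satisfy the Volterra equation ρ(t) = α(t) + ∫₀ᵗ β(t−τ) ρ(τ) dτ for all t ≥ 0. If C₀ d < K, then there exists M > 0 such that |ρ(t)| ≤ M/(1+t) for all t ≥ 0. -/

import Mathlib

/-!
Work with the weighted quantity `g t = (1 + t) ‖ρ t‖`. The Volterra equation gives
`g t ≤ A + d W ∫₀ᵗ (1 + t) / ((1 + K (t - τ))² (1 + τ)) dτ` whenever `g ≤ W` on `[0, t]`, and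
splitting the integral at `t / 2` bounds it by `4 / K`. Taking `W` to be the maximum of `g` on
`[0, T]`, attained at some `s`, and evaluating at `s` gives `W ≤ A + (4 d / K) W`, so
`W ≤ A / (1 - 4 d / K)` as soon as `4 d < K`; thus `C₀ = 4`.
-/

open MeasureTheory intervalIntegral Set

lemma one_add_mul_sub_pos {K τ t : ℝ} (hK : 0 ≤ K) (hτ : τ ≤ t) : 0 < 1 + K * (t - τ) := by
  have : 0 ≤ K * (t - τ) := mul_nonneg hK (sub_nonneg.2 hτ)
  linarith

theorem integral_inv_one_add_mul_sub_sq {K a b : ℝ} (hK : 0 < K) (hab : a ≤ b) :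
    ∫ τ in a..b, ((1 + K * (b - τ)) ^ 2)⁻¹ = (1 - (1 + K * (b - a))⁻¹) / K := by
  have hpos : ∀ τ ∈ uIcc a b, 0 < 1 + K * (b - τ) := fun τ hτ =>
    one_add_mul_sub_pos hK.le (uIcc_of_le hab ▸ hτ).2
  have hderiv : ∀ τ ∈ uIcc a b,
      HasDerivAt (fun τ => (1 + K * (b - τ))⁻¹ / K) ((1 + K * (b - τ)) ^ 2)⁻¹ τ := by
    intro τ hτ
    have hlin : HasDerivAt (fun τ => 1 + K * (b - τ)) (-K) τ := by
      simpa using (((hasDerivAt_id τ).const_sub b).const_mul K).const_add 1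
    exact ((hlin.inv (hpos τ hτ).ne').div_const K).congr_deriv (by field_simp)
  have hcont : ContinuousOn (fun τ => ((1 + K * (b - τ)) ^ 2)⁻¹) (uIcc a b) :=
    (by fun_prop : Continuous fun τ => (1 + K * (b - τ)) ^ 2).continuousOn.inv₀
      fun τ hτ => (pow_pos (hpos τ hτ) 2).ne'
  rw [integral_eq_sub_of_hasDerivAt hderiv hcont.intervalIntegrable]
  simp only [sub_self, mul_zero, add_zero, inv_one]
  ring

lemma continuousOn_kernel {K t : ℝ} (hK : 0 ≤ K) :
    ContinuousOn (fun τ => (1 + t) / ((1 + K * (t - τ)) ^ 2 * (1 + τ))) (Icc 0 t) :=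
  continuousOn_const.div (by fun_prop) fun τ hτ =>
    (mul_pos (pow_pos (one_add_mul_sub_pos hK hτ.2) 2) (by linarith [hτ.1])).ne'

lemma intervalIntegrable_kernel {K t a b : ℝ} (hK : 0 ≤ K) (ha : 0 ≤ a) (hab : a ≤ b)
    (hb : b ≤ t) :
    IntervalIntegrable (fun τ => (1 + t) / ((1 + K * (t - τ)) ^ 2 * (1 + τ))) volume a b :=
  ((continuousOn_kernel hK).mono (uIcc_of_le hab ▸ Icc_subset_Icc ha hb)).intervalIntegrable

lemma integral_kernel_left_half_le {K t : ℝ} (hK : 1 ≤ K) (ht : 0 ≤ t) :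
    ∫ τ in (0 : ℝ)..t / 2, (1 + t) / ((1 + K * (t - τ)) ^ 2 * (1 + τ)) ≤ 2 / K := by
  have hK0 : 0 < K := by linarith
  have hD : 0 < (1 + K * (t / 2)) ^ 2 := by positivity
  calc ∫ τ in (0 : ℝ)..t / 2, (1 + t) / ((1 + K * (t - τ)) ^ 2 * (1 + τ))
      ≤ ∫ _ in (0 : ℝ)..t / 2, (1 + t) / (1 + K * (t / 2)) ^ 2 := by
        refine integral_mono_on (by linarith)
          (intervalIntegrable_kernel hK0.le le_rfl (by linarith) (by linarith))
          intervalIntegrable_const fun τ hτ => ?_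
        have hmid : 1 + K * (t / 2) ≤ 1 + K * (t - τ) := by nlinarith [hτ.2]
        have hsq : (1 + K * (t / 2)) ^ 2 ≤ (1 + K * (t - τ)) ^ 2 * (1 + τ) :=
          calc (1 + K * (t / 2)) ^ 2 ≤ (1 + K * (t - τ)) ^ 2 := by gcongr
            _ ≤ (1 + K * (t - τ)) ^ 2 * (1 + τ) := le_mul_of_one_le_right (sq_nonneg _)
                (by linarith [hτ.1])
        exact div_le_div_of_nonneg_left (by linarith) hD hsq
    _ = t / 2 * (1 + t) / (1 + K * (t / 2)) ^ 2 := by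
        rw [intervalIntegral.integral_const, smul_eq_mul, sub_zero, mul_div_assoc]
    _ ≤ 2 / K := by
        rw [div_le_div_iff₀ hD hK0]
        nlinarith [mul_nonneg (sub_nonneg.2 hK) (sq_nonneg t)]

lemma integral_kernel_right_half_le {K t : ℝ} (hK : 1 ≤ K) (ht : 0 ≤ t) :
    ∫ τ in t / 2..t, (1 + t) / ((1 + K * (t - τ)) ^ 2 * (1 + τ)) ≤ 2 / K := by
  have hK0 : 0 < K := by linarith
  have hpos : ∀ τ ∈ Icc (t / 2) t, 0 < 1 + K * (t - τ) := fun τ hτ =>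
    one_add_mul_sub_pos hK0.le hτ.2
  have hint : IntervalIntegrable (fun τ => 2 * ((1 + K * (t - τ)) ^ 2)⁻¹) volume (t / 2) t :=
    ((by fun_prop : Continuous fun τ => (1 + K * (t - τ)) ^ 2).continuousOn.inv₀
      (fun τ hτ => (pow_pos (hpos τ (uIcc_of_le (by linarith : t / 2 ≤ t) ▸ hτ)) 2).ne')
      |>.intervalIntegrable).const_mul 2
  calc ∫ τ in t / 2..t, (1 + t) / ((1 + K * (t - τ)) ^ 2 * (1 + τ))
      ≤ ∫ τ in t / 2..t, 2 * ((1 + K * (t - τ)) ^ 2)⁻¹ := by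
        refine integral_mono_on (by linarith)
          (intervalIntegrable_kernel hK0.le (by linarith) (by linarith) le_rfl) hint
          fun τ hτ => ?_
        have hsq := pow_pos (hpos τ hτ) 2
        rw [← div_eq_mul_inv, div_le_div_iff₀ (by nlinarith [hτ.1]) hsq]
        nlinarith [hτ.1]
    _ = 2 * ((1 - (1 + K * (t - t / 2))⁻¹) / K) := by
        rw [intervalIntegral.integral_const_mul,
          integral_inv_one_add_mul_sub_sq hK0 (by linarith)]
    _ ≤ 2 / K := by
        have : 0 ≤ (1 + K * (t - t / 2))⁻¹ := inv_nonneg.2 (hpos (t / 2) ⟨le_rfl, by linarith⟩).le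
        rw [mul_div_assoc']
        gcongr
        linarith

theorem integral_kernel_le {K t : ℝ} (hK : 1 ≤ K) (ht : 0 ≤ t) :
    ∫ τ in (0 : ℝ)..t, (1 + t) / ((1 + K * (t - τ)) ^ 2 * (1 + τ)) ≤ 4 / K := by
  have hK0 : 0 ≤ K := by linarith
  rw [← integral_add_adjacent_intervals
    (intervalIntegrable_kernel (b := t / 2) hK0 le_rfl (by linarith) (by linarith))
    (intervalIntegrable_kernel hK0 (by linarith) (by linarith) le_rfl)]
  calc _ ≤ 2 / K + 2 / K :=
        add_le_add (integral_kernel_left_half_le hK ht) (integral_kernel_right_half_le hK ht)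
    _ = 4 / K := by ring

theorem mul_norm_integral_conv_le {E : Type*} [NormedRing E] [NormedSpace ℝ E]
    {K d t W : ℝ} {β ρ : ℝ → E} (hK : 1 ≤ K) (ht : 0 ≤ t)
    (hβ : ∀ s, 0 ≤ s → ‖β s‖ ≤ d / (1 + K * s) ^ 2)
    (hρ : ∀ τ ∈ Icc 0 t, (1 + τ) * ‖ρ τ‖ ≤ W) :
    (1 + t) * ‖∫ τ in (0 : ℝ)..t, β (t - τ) * ρ τ‖ ≤ 4 * d / K * W := by
  have hK0 : 0 < K := by linarith
  have hd : 0 ≤ d := by simpa using (norm_nonneg _).trans (hβ 0 le_rfl)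
  have hW : 0 ≤ W := le_trans (by positivity) (hρ 0 ⟨le_rfl, ht⟩)
  have hpointwise : ∀ τ ∈ Ioc 0 t, ‖β (t - τ) * ρ τ‖
      ≤ d * W / (1 + t) * ((1 + t) / ((1 + K * (t - τ)) ^ 2 * (1 + τ))) := by
    intro τ hτ
    have h1τ : 0 < 1 + τ := by linarith [hτ.1]
    have hρτ : ‖ρ τ‖ ≤ W / (1 + τ) := by
      rw [le_div_iff₀ h1τ, mul_comm]
      exact hρ τ ⟨hτ.1.le, hτ.2⟩
    calc ‖β (t - τ) * ρ τ‖ ≤ ‖β (t - τ)‖ * ‖ρ τ‖ := norm_mul_le _ _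
      _ ≤ d / (1 + K * (t - τ)) ^ 2 * (W / (1 + τ)) :=
          mul_le_mul (hβ _ (by linarith [hτ.2])) hρτ (norm_nonneg _) (by positivity)
      _ = _ := by field_simp
  calc (1 + t) * ‖∫ τ in (0 : ℝ)..t, β (t - τ) * ρ τ‖
      ≤ (1 + t) * ∫ τ in (0 : ℝ)..t,
          d * W / (1 + t) * ((1 + t) / ((1 + K * (t - τ)) ^ 2 * (1 + τ))) := by
        gcongr
        exact norm_integral_le_of_norm_le ht (.of_forall hpointwise)
          ((intervalIntegrable_kernel hK0.le le_rfl ht le_rfl).const_mul _)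
    _ ≤ (1 + t) * (d * W / (1 + t) * (4 / K)) := by
        rw [intervalIntegral.integral_const_mul]
        gcongr
        exact integral_kernel_le hK ht
    _ = 4 * d / K * W := by field_simp

theorem le_div_one_sub_of_forall_le_add_mul {g : ℝ → ℝ} {T A θ : ℝ} (hT : 0 ≤ T)
    (hθ : θ < 1) (hg : ContinuousOn g (Icc 0 T))
    (hstep : ∀ t ∈ Icc 0 T, ∀ W, (∀ τ ∈ Icc 0 t, g τ ≤ W) → g t ≤ A + θ * W) :
    g T ≤ A / (1 - θ) := by
  obtain ⟨s, hs, hmax⟩ := isCompact_Icc.exists_isMaxOn ⟨0, le_rfl, hT⟩ hg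
  have hself : g s ≤ A + θ * g s :=
    hstep s hs (g s) fun τ hτ => hmax ⟨hτ.1, hτ.2.trans hs.2⟩
  calc g T ≤ g s := hmax ⟨hT, le_rfl⟩
    _ ≤ A / (1 - θ) := by rw [le_div_iff₀ (by linarith)]; linarith

theorem volterra_apriori_decay :
    ∃ C₀ : ℝ, 0 < C₀ ∧
      ∀ (K A d : ℝ), 1 ≤ K → 0 < A → 0 < d →
      ∀ (α β ρ : ℝ → ℂ),
        ContinuousOn α (Set.Ici (0 : ℝ)) →
        ContinuousOn β (Set.Ici (0 : ℝ)) →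
        ContinuousOn ρ (Set.Ici (0 : ℝ)) →
        (∀ t : ℝ, 0 ≤ t → ‖α t‖ ≤ A / (1 + t)) →
        (∀ t : ℝ, 0 ≤ t → ‖β t‖ ≤ d / (1 + K * t) ^ 2) →
        (∀ t : ℝ, 0 ≤ t → ρ t = α t + ∫ τ in (0 : ℝ)..t, β (t - τ) * ρ τ) →
        C₀ * d < K →
        ∃ M : ℝ, 0 < M ∧ ∀ t : ℝ, 0 ≤ t → ‖ρ t‖ ≤ M / (1 + t) := by
  refine ⟨4, four_pos, fun K A d hK hA _ α β ρ _ _ hρc hα hβ hρ hCd => ?_⟩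
  have hθ : 4 * d / K < 1 := (div_lt_one (by linarith)).2 hCd
  refine ⟨A / (1 - 4 * d / K), div_pos hA (by linarith), fun T hT => ?_⟩
  have hg : ContinuousOn (fun s => (1 + s) * ‖ρ s‖) (Icc 0 T) :=
    (continuousOn_const.add continuousOn_id).mul (hρc.mono Icc_subset_Ici_self).norm
  have hbound := le_div_one_sub_of_forall_le_add_mul hT hθ hg fun t ht W hW => by
    have hαt : (1 + t) * ‖α t‖ ≤ A := by
      rw [mul_comm, ← le_div_iff₀ (by linarith [ht.1])]
      exact hα t ht.1
    calc (1 + t) * ‖ρ t‖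
        ≤ (1 + t) * ‖α t‖ + (1 + t) * ‖∫ τ in (0 : ℝ)..t, β (t - τ) * ρ τ‖ := by
          rw [hρ t ht.1, ← mul_add]
          gcongr
          · linarith [ht.1]
          · exact norm_add_le _ _
      _ ≤ A + 4 * d / K * W := add_le_add hαt (mul_norm_integral_conv_le hK ht.1 hβ hW)
  rwa [le_div_iff₀ (by linarith), mul_comm]
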